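/- arXiv:2603.21311 — 2 statements merged into one kernel-verified Lean document; each statement's English description precedes it below -/
import Mathlib

section
/- Let {X_n} be Banach spaces, U a free ultrafilter on ℕ, and T_n ∈ L(X_n) with sup_n ‖T_n‖ < ∞. Then the numerical radius of the ultraproduct operator satisfies v((T_n)_U) ≥ lim_U v(T_n). -/
open Filter Metric ENNReal

noncomputable def nradius {E : Type*} [SeminormedAddCommGroup E] [NormedSpace ℝ E]
    (T : E →L[ℝ] E) : ℝ :=
  sSup {r : ℝ | ∃ (x : E) (f : E →L[ℝ] ℝ), ‖x‖ = 1 ∧ ‖f‖ = 1 ∧ f x = 1 ∧ r = |f (T x)|}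

noncomputable def nindex (E : Type*) [SeminormedAddCommGroup E] [NormedSpace ℝ E] : ℝ :=
  sInf {r : ℝ | ∃ T : E →L[ℝ] E, ‖T‖ = 1 ∧ r = nradius T}

noncomputable def nullIdeal (X : ℕ → Type*) [∀ n, NormedAddCommGroup (X n)]
    [∀ n, NormedSpace ℝ (X n)] (U : Ultrafilter ℕ) : Submodule ℝ (lp X ∞) where
  carrier := {f | Tendsto (fun n => ‖f n‖) (U : Filter ℕ) (nhds 0)}
  zero_mem' := by
    simpa using (tendsto_const_nhds : Tendsto (fun _ : ℕ => (0 : ℝ)) (U : Filter ℕ) (nhds 0))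
  add_mem' := by
    intro f g hf hg
    have h := hf.add hg
    rw [add_zero] at h
    refine squeeze_zero (fun n => norm_nonneg _) (fun n => ?_) h
    simpa using norm_add_le (f n) (g n)
  smul_mem' := by
    intro c f hf
    have h := hf.const_mul ‖c‖
    rw [mul_zero] at h
    refine squeeze_zero (fun n => norm_nonneg _) (fun n => ?_) h
    simp [norm_smul]

/-!
Fix `r < L`. For `U`-almost every `n` there are `x_n`, `f_n` of norm one with `f_n x_n = 1` and
`r < |f_n (T_n x_n)|`; elsewhere take `x_n = 0`, `f_n = 0`. The class of `(x_n)` in the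
ultraproduct and the functional `Φ((f_n)_U)` both have norm at most one and pair to
`lim_U f_n x_n = 1`, so both have norm exactly one, and `Φ((f_n)_U)` evaluated at
`(T_n)_U (x_n)_U = (T_n x_n)_U` is `lim_U f_n (T_n x_n)`, of absolute value at least `r`.
-/

open Topology

theorem Ultrafilter.tendsto_limUnder_of_forall_abs_le {α : Type*} (U : Ultrafilter α)
    {a : α → ℝ} {C : ℝ} (h : ∀ i, |a i| ≤ C) :
    Tendsto a U (𝓝 (limUnder (U : Filter α) a)) := by
  have hU : (U.map a : Filter ℝ) ≤ 𝓟 (Set.Icc (-C) C) :=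
    le_principal_iff.mpr (mem_map.mpr (Eventually.of_forall fun i => abs_le.mp (h i)))
  obtain ⟨l, -, hl⟩ := isCompact_Icc.ultrafilter_le_nhds _ hU
  exact tendsto_nhds_limUnder ⟨l, hl⟩

theorem Submodule.norm_liftQL_le {𝕜 M N : Type*} [NontriviallyNormedField 𝕜]
    [SeminormedAddCommGroup M] [NormedSpace 𝕜 M] [SeminormedAddCommGroup N] [NormedSpace 𝕜 N]
    (S : Submodule 𝕜 M) (f : M →L[𝕜] N) (hf : S ≤ f.ker) :
    ‖S.liftQL f hf‖ ≤ ‖f‖ := by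
  let g := (f : M →+ N).mkNormedAddGroupHom ‖f‖ f.le_opNorm
  refine ContinuousLinearMap.opNorm_le_bound _ (norm_nonneg f) fun x => ?_
  calc ‖S.liftQL f hf x‖ ≤ ‖g‖ * ‖x‖ :=
        QuotientAddGroup.norm_lift_apply_le (S := S.toAddSubgroup) g (fun x hx => hf hx) x
    _ ≤ ‖f‖ * ‖x‖ := by
        gcongr
        exact AddMonoidHom.mkNormedAddGroupHom_norm_le _ (norm_nonneg f) _

section UltraproductFunctional

variable {X : ℕ → Type*} [∀ n, NormedAddCommGroup (X n)] [∀ n, NormedSpace ℝ (X n)]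
  (U : Ultrafilter ℕ) (f : ∀ n, X n →L[ℝ] ℝ) {C : ℝ} (hf : ∀ n, ‖f n‖ ≤ C)

include hf in
theorem abs_apply_lp_le (g : lp X ∞) (n : ℕ) : |f n (g n)| ≤ C * ‖g‖ :=
  (f n).le_of_opNorm_le_of_le (hf n) (lp.norm_apply_le_norm top_ne_zero g n)

include hf in
theorem tendsto_limUnder_apply_lp (g : lp X ∞) :
    Tendsto (fun n => f n (g n)) U (𝓝 (limUnder (U : Filter ℕ) fun n => f n (g n))) :=
  U.tendsto_limUnder_of_forall_abs_le (abs_apply_lp_le f hf g)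

noncomputable def lpUltraLimit : lp X ∞ →L[ℝ] ℝ :=
  LinearMap.mkContinuous
    { toFun := fun g => limUnder (U : Filter ℕ) fun n => f n (g n)
      map_add' := fun g h => by
        refine Tendsto.limUnder_eq ?_
        simpa only [lp.coeFn_add, Pi.add_apply, map_add] using
          (tendsto_limUnder_apply_lp U f hf g).add (tendsto_limUnder_apply_lp U f hf h)
      map_smul' := fun c g => by
        refine Tendsto.limUnder_eq ?_
        simpa only [lp.coeFn_smul, Pi.smul_apply, map_smul, smul_eq_mul, RingHom.id_apply] using
          (tendsto_limUnder_apply_lp U f hf g).const_mul c }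
    C fun g => le_of_tendsto' (tendsto_limUnder_apply_lp U f hf g).abs
      (abs_apply_lp_le f hf g)

theorem tendsto_lpUltraLimit (g : lp X ∞) :
    Tendsto (fun n => f n (g n)) U (𝓝 (lpUltraLimit U f hf g)) :=
  tendsto_limUnder_apply_lp U f hf g

theorem nullIdeal_le_ker_lpUltraLimit : nullIdeal X U ≤ (lpUltraLimit U f hf).ker := by
  intro g hg
  have hC : Tendsto (fun n => C * ‖g n‖) U (𝓝 0) := by
    simpa only [mul_zero] using hg.const_mul C
  exact tendsto_nhds_unique (tendsto_lpUltraLimit U f hf g)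
    (squeeze_zero_norm (fun n => (f n).le_of_opNorm_le (hf n) (g n)) hC)

/-- The functional `Φ((f_n)_U)` on the ultraproduct `∏_U X_n = ℓ^∞(X_n) ⧸ nullIdeal X U`. -/
noncomputable def ultraproductFunctional : (lp X ∞ ⧸ nullIdeal X U) →L[ℝ] ℝ :=
  (nullIdeal X U).liftQL (lpUltraLimit U f hf) (nullIdeal_le_ker_lpUltraLimit U f hf)

theorem tendsto_ultraproductFunctional_mk (g : lp X ∞) :
    Tendsto (fun n => f n (g n)) U
      (𝓝 (ultraproductFunctional U f hf (Submodule.Quotient.mk g))) :=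
  tendsto_lpUltraLimit U f hf g

theorem norm_ultraproductFunctional_le : ‖ultraproductFunctional U f hf‖ ≤ C :=
  (Submodule.norm_liftQL_le _ _ _).trans
    (LinearMap.mkContinuous_norm_le _ ((norm_nonneg _).trans (hf 0)) _)

end UltraproductFunctional

theorem Memℓp.infty_apply_of_norm_le {𝕜 ι : Type*} [NontriviallyNormedField 𝕜]
    {X Y : ι → Type*} [∀ i, NormedAddCommGroup (X i)] [∀ i, NormedSpace 𝕜 (X i)]
    [∀ i, NormedAddCommGroup (Y i)] [∀ i, NormedSpace 𝕜 (Y i)]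
    {T : ∀ i, X i →L[𝕜] Y i} {M : ℝ} (hT : ∀ i, ‖T i‖ ≤ M) {g : ∀ i, X i} (hg : Memℓp g ∞) :
    Memℓp (fun i => T i (g i)) ∞ := by
  obtain ⟨C, hC⟩ := memℓp_infty_iff.mp hg
  exact memℓp_infty ⟨M * C, by
    rintro _ ⟨i, rfl⟩
    exact (T i).le_of_opNorm_le_of_le (hT i) (hC ⟨i, rfl⟩)⟩

theorem norm_eq_one_of_apply_eq_one {E : Type*} [SeminormedAddCommGroup E] [NormedSpace ℝ E]
    {f : E →L[ℝ] ℝ} {x : E} (hf : ‖f‖ ≤ 1) (hx : ‖x‖ ≤ 1) (hfx : f x = 1) :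
    ‖x‖ = 1 ∧ ‖f‖ = 1 := by
  have h : 1 ≤ ‖f‖ * ‖x‖ := by simpa [hfx] using f.le_opNorm x
  constructor <;> nlinarith [norm_nonneg f, norm_nonneg x]

section NumericalRadius

variable {E : Type*} [SeminormedAddCommGroup E] [NormedSpace ℝ E] (T : E →L[ℝ] E)

theorem nradius_nonneg : 0 ≤ nradius T :=
  Real.sSup_nonneg fun _ ⟨_, _, _, _, _, h⟩ => h ▸ abs_nonneg _

theorem le_nradius {x : E} {f : E →L[ℝ] ℝ} (hx : ‖x‖ = 1) (hf : ‖f‖ = 1) (hfx : f x = 1) :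
    |f (T x)| ≤ nradius T := by
  refine le_csSup ⟨‖T‖, ?_⟩ ⟨x, f, hx, hf, hfx, rfl⟩
  rintro _ ⟨y, g, hy, hg, -, rfl⟩
  simpa [hy] using g.le_of_opNorm_le_of_le hg.le (T.le_opNorm y)

theorem exists_lt_abs_apply_of_lt_nradius {r : ℝ} (hr : 0 ≤ r) (h : r < nradius T) :
    ∃ (x : E) (f : E →L[ℝ] ℝ), ‖x‖ = 1 ∧ ‖f‖ = 1 ∧ f x = 1 ∧ r < |f (T x)| := by
  obtain ⟨_, ⟨x, f, hx, hf, hfx, rfl⟩, hlt⟩ := exists_lt_of_lt_csSup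
    (Set.nonempty_iff_ne_empty.mpr fun hs => by
      rw [nradius, hs, Real.sSup_empty] at h
      exact h.not_ge hr) h
  exact ⟨x, f, hx, hf, hfx, hlt⟩

theorem exists_norm_le_one_of_lt_nradius {r : ℝ} (hr : 0 ≤ r) :
    ∃ (x : E) (f : E →L[ℝ] ℝ), ‖x‖ ≤ 1 ∧ ‖f‖ ≤ 1 ∧
      (r < nradius T → f x = 1 ∧ r < |f (T x)|) := by
  by_cases h : r < nradius T
  · obtain ⟨x, f, hx, hf, hfx, hlt⟩ := exists_lt_abs_apply_of_lt_nradius T hr h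
    exact ⟨x, f, hx.le, hf.le, fun _ => ⟨hfx, hlt⟩⟩
  · exact ⟨0, 0, by simp, by simp, fun h' => absurd h' h⟩

end NumericalRadius

theorem ultraproduct_nradius_ge_general
    (X : ℕ → Type*) [∀ n, NormedAddCommGroup (X n)] [∀ n, NormedSpace ℝ (X n)]
    (U : Ultrafilter ℕ)
    (T : ∀ n, X n →L[ℝ] X n) (M : ℝ) (hM : ∀ n, ‖T n‖ ≤ M)
    (Tq : (lp X ∞ ⧸ nullIdeal X U) →L[ℝ] (lp X ∞ ⧸ nullIdeal X U))
    (hTq : ∀ g h : lp X ∞, (∀ n, h n = T n (g n)) →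
      Tq (Submodule.Quotient.mk g) = Submodule.Quotient.mk h)
    (L : ℝ) (hL : Tendsto (fun n => nradius (T n)) (U : Filter ℕ) (nhds L)) :
    L ≤ nradius Tq := by
  refine le_of_forall_lt_imp_le_of_dense fun r hr => ?_
  rcases lt_or_ge r 0 with hr0 | hr0
  · exact hr0.le.trans (nradius_nonneg Tq)
  choose x f hx hf hgood using fun n => exists_norm_le_one_of_lt_nradius (T n) hr0
  have hev : ∀ᶠ n in (U : Filter ℕ), f n (x n) = 1 ∧ r < |f n (T n (x n))| :=
    (hL.eventually (lt_mem_nhds hr)).mono hgood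
  let g : lp X ∞ := ⟨x, memℓp_infty ⟨1, by rintro _ ⟨n, rfl⟩; exact hx n⟩⟩
  let Tg : lp X ∞ := ⟨fun n => T n (x n), g.2.infty_apply_of_norm_le hM⟩
  let F := ultraproductFunctional U f hf
  have hFg : F (Submodule.Quotient.mk g) = 1 :=
    tendsto_nhds_unique (tendsto_ultraproductFunctional_mk U f hf g)
      (tendsto_const_nhds.congr' (hev.mono fun n hn => hn.1.symm))
  have hFTg : r ≤ |F (Tq (Submodule.Quotient.mk g))| := by
    rw [hTq g Tg fun n => rfl]
    exact ge_of_tendsto (tendsto_ultraproductFunctional_mk U f hf Tg).abs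
      (hev.mono fun n hn => hn.2.le)
  obtain ⟨hg1, hF1⟩ := norm_eq_one_of_apply_eq_one (norm_ultraproductFunctional_le U f hf)
    ((Submodule.Quotient.norm_mk_le _ g).trans (lp.norm_le_of_forall_le zero_le_one hx)) hFg
  exact hFTg.trans (le_nradius Tq hg1 hF1 hFg)

theorem ultraproduct_nradius_ge
    (X : ℕ → Type*) [∀ n, NormedAddCommGroup (X n)] [∀ n, NormedSpace ℝ (X n)]
    [∀ n, CompleteSpace (X n)]
    (U : Ultrafilter ℕ) (hU : (U : Filter ℕ) ≤ Filter.cofinite)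
    (T : ∀ n, X n →L[ℝ] X n) (M : ℝ) (hM : ∀ n, ‖T n‖ ≤ M)
    (Tq : (lp X ∞ ⧸ nullIdeal X U) →L[ℝ] (lp X ∞ ⧸ nullIdeal X U))
    (hTq : ∀ g h : lp X ∞, (∀ n, h n = T n (g n)) →
      Tq (Submodule.Quotient.mk g) = Submodule.Quotient.mk h)
    (L : ℝ) (hL : Tendsto (fun n => nradius (T n)) (U : Filter ℕ) (nhds L)) :
    L ≤ nradius Tq :=
  ultraproduct_nradius_ge_general X U T M hM Tq hTq L hL
end

section
/- Let {X_n} be Banach spaces, U a free ultrafilter on ℕ, and T_n ∈ L(X_n) with sup_n ‖T_n‖ = M < ∞. Then v((T_n)_U) ≤ lim_U v(T_n). -/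
/-! The argument rests on an estimate that controls the numerical radius `v` without using states:
for every real `s`, `‖y + s • S y‖ * (1 - |s| v(S)) ≤ (1 + s² ‖S‖²) ‖y‖`. It is coordinatewise, so
it passes to the ultraproduct with `v(Tₙ)` replaced by its limit `L` along `U`. Conversely, testing
it at a pair `x, f` with `‖x‖ = ‖f‖ = f x = 1` gives `(1 + s f(S x)) (1 - |s| w) ≤ 1 + O(s²)`, and
letting `s → 0` from both sides yields `|f (S x)| ≤ w`. -/

open Filter Metric ENNReal

open Topology

theorem nradius_nonneg_s9 {E : Type*} [SeminormedAddCommGroup E] [NormedSpace ℝ E]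
    (T : E →L[ℝ] E) : 0 ≤ nradius T :=
  Real.sSup_nonneg fun _ ⟨_, _, _, _, _, hr⟩ => hr ▸ abs_nonneg _

theorem abs_apply_le_nradius {E : Type*} [SeminormedAddCommGroup E] [NormedSpace ℝ E]
    (T : E →L[ℝ] E) {x : E} {f : E →L[ℝ] ℝ} (hx : ‖x‖ = 1) (hf : ‖f‖ = 1) (hfx : f x = 1) :
    |f (T x)| ≤ nradius T := by
  refine le_csSup ⟨‖T‖, ?_⟩ ⟨x, f, hx, hf, hfx, rfl⟩
  rintro _ ⟨y, g, hy, hg, -, rfl⟩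
  simpa [hy, hg] using g.le_opNorm_of_le (T.le_opNorm y)

theorem abs_apply_le_nradius_mul_norm {E : Type*} [SeminormedAddCommGroup E] [NormedSpace ℝ E]
    (T : E →L[ℝ] E) {u : E} {f : E →L[ℝ] ℝ} (hf : ‖f‖ = 1) (hfu : f u = ‖u‖) :
    |f (T u)| ≤ nradius T * ‖u‖ := by
  rcases (norm_nonneg u).eq_or_lt with hu | hu
  · simpa [hf, ← hu] using f.le_opNorm_of_le (T.le_opNorm u)
  have hx : ‖‖u‖⁻¹ • u‖ = 1 := by rw [norm_smul, norm_inv, norm_norm, inv_mul_cancel₀ hu.ne']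
  have hfx : f (‖u‖⁻¹ • u) = 1 := by rw [map_smul, hfu, smul_eq_mul, inv_mul_cancel₀ hu.ne']
  have := abs_apply_le_nradius T hx hf hfx
  rwa [map_smul, map_smul, smul_eq_mul, abs_mul, abs_inv, abs_norm, inv_mul_le_iff₀ hu,
    mul_comm] at this

theorem norm_add_smul_apply_mul_le {E : Type*} [SeminormedAddCommGroup E] [NormedSpace ℝ E]
    (S : E →L[ℝ] E) (s : ℝ) (y : E) :
    ‖y + s • S y‖ * (1 - |s| * nradius S) ≤ (1 + s ^ 2 * ‖S‖ ^ 2) * ‖y‖ := by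
  set u := y + s • S y
  rcases eq_or_ne ‖u‖ 0 with hu | hu
  · rw [hu, zero_mul]; positivity
  obtain ⟨f, hf, hfu⟩ := exists_dual_vector ℝ u hu
  replace hfu : f u = ‖u‖ := hfu
  have hf_le (z : E) : f z ≤ ‖z‖ := by
    simpa [hf] using (le_abs_self _).trans (f.le_opNorm z)
  -- `f u` rewritten through `f (S u)`, which the numerical radius controls
  have hexpand : ‖u‖ = f y + s * f (S u) - s ^ 2 * f (S (S y)) := by
    rw [← hfu]
    simp only [u, map_add, map_smul, smul_eq_mul]
    ring
  have hSu : s * f (S u) ≤ |s| * nradius S * ‖u‖ := by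
    calc s * f (S u) ≤ |s| * |f (S u)| := by rw [← abs_mul]; exact le_abs_self _
      _ ≤ |s| * (nradius S * ‖u‖) := by gcongr; exact abs_apply_le_nradius_mul_norm S hf hfu
      _ = _ := by ring
  have hSSy : -f (S (S y)) ≤ ‖S‖ ^ 2 * ‖y‖ := by
    calc -f (S (S y)) = f (-S (S y)) := by simp
      _ ≤ ‖S (S y)‖ := by simpa using hf_le (-S (S y))
      _ ≤ ‖S‖ * (‖S‖ * ‖y‖) := S.le_opNorm_of_le (S.le_opNorm y)
      _ = _ := by ring
  nlinarith [hf_le y, sq_nonneg s]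

theorem nonpos_of_forall_le_mul {b c w : ℝ} (h : ∀ t : ℝ, 0 < t → t * w < 1 → b ≤ t * c) :
    b ≤ 0 := by
  have hlim : Tendsto (fun t : ℝ => t * c) (𝓝[>] 0) (𝓝 0) := by
    simpa using ((continuous_mul_const c).tendsto 0).mono_left nhdsWithin_le_nhds
  have hsmall : ∀ᶠ t : ℝ in 𝓝[>] 0, t * w < 1 :=
    nhdsWithin_le_nhds <| (continuous_mul_const w).tendsto' 0 0 (zero_mul w) |>.eventually
      (gt_mem_nhds one_pos)
  refine ge_of_tendsto hlim ?_
  filter_upwards [self_mem_nhdsWithin, hsmall] with t ht htw using h t ht htw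

theorem nradius_le_of_forall_norm_add_smul_mul_le {E : Type*} [SeminormedAddCommGroup E]
    [NormedSpace ℝ E] (S : E →L[ℝ] E) {w K : ℝ} (hw : 0 ≤ w)
    (h : ∀ s : ℝ, |s| * w < 1 → ∀ y, ‖y + s • S y‖ * (1 - |s| * w) ≤ (1 + s ^ 2 * K) * ‖y‖) :
    nradius S ≤ w := by
  refine Real.sSup_le ?_ hw
  rintro _ ⟨x, f, hx, hf, hfx, rfl⟩
  have hmul (s : ℝ) (hs : |s| * w < 1) : (1 + s * f (S x)) * (1 - |s| * w) ≤ 1 + s ^ 2 * K := by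
    have hlow : 1 + s * f (S x) ≤ ‖x + s • S x‖ := by
      simpa [hf, hfx] using (le_abs_self _).trans (f.le_opNorm (x + s • S x))
    simpa [hx] using (mul_le_mul_of_nonneg_right hlow (by linarith)).trans (h s hs x)
  have hside (σ : ℝ) (hσ : |σ| = 1) : σ * f (S x) - w ≤ 0 := by
    have hσ2 : σ ^ 2 = 1 := by rw [← sq_abs, hσ, one_pow]
    refine nonpos_of_forall_le_mul (w := w) (c := K + σ * f (S x) * w) fun t ht htw => ?_
    have := hmul (σ * t) (by rwa [abs_mul, hσ, one_mul, abs_of_pos ht])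
    rw [abs_mul, hσ, one_mul, abs_of_pos ht, mul_pow, hσ2, one_mul] at this
    refine le_of_mul_le_mul_left ?_ ht
    linarith
  exact abs_le.mpr ⟨by linarith [hside (-1) (by simp)], by linarith [hside 1 (by simp)]⟩

theorem Ultrafilter.exists_tendsto_of_abs_le {ι : Type*} (U : Ultrafilter ι) {u : ι → ℝ} {C : ℝ}
    (hu : ∀ i, |u i| ≤ C) : ∃ ℓ, Tendsto u U (𝓝 ℓ) := by
  obtain ⟨ℓ, -, hℓ⟩ := isCompact_Icc.ultrafilter_le_nhds (U.map u)
    (by rw [Ultrafilter.coe_map]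
        exact tendsto_principal.mpr (.of_forall fun i => abs_le.mp (hu i)))
  exact ⟨ℓ, hℓ⟩

section Ultraproduct

variable {X : ℕ → Type*} [∀ n, NormedAddCommGroup (X n)] [∀ n, NormedSpace ℝ (X n)]
  {U : Ultrafilter ℕ}

theorem norm_mk_le_of_eventually_norm_le {g : lp X ∞} {B : ℝ} (hB : ∀ᶠ n in U, ‖g n‖ ≤ B) :
    ‖(Submodule.Quotient.mk g : lp X ∞ ⧸ nullIdeal X U)‖ ≤ B := by
  obtain ⟨n₀, hn₀⟩ := hB.exists
  have hB0 : 0 ≤ B := (norm_nonneg _).trans hn₀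
  have hmem : Memℓp (fun n => if ‖g n‖ ≤ B then g n else 0) ∞ := by
    refine memℓp_infty ⟨B, ?_⟩
    rintro _ ⟨n, rfl⟩
    dsimp only
    split_ifs with h
    exacts [h, by simpa using hB0]
  let g' : lp X ∞ := ⟨_, hmem⟩
  have hnull : g - g' ∈ nullIdeal X U := by
    refine tendsto_const_nhds.congr' ?_
    filter_upwards [hB] with n hn
    change (0 : ℝ) = ‖g n - (if ‖g n‖ ≤ B then g n else 0)‖
    rw [if_pos hn, sub_self, norm_zero]
  calc ‖(Submodule.Quotient.mk g : lp X ∞ ⧸ nullIdeal X U)‖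
      = ‖(Submodule.Quotient.mk g' : lp X ∞ ⧸ nullIdeal X U)‖ := by
        rw [(Submodule.Quotient.eq _).mpr hnull]
    _ ≤ ‖g'‖ := Submodule.Quotient.norm_mk_le _ _
    _ ≤ B := lp.norm_le_of_forall_le hB0 fun n => by
        change ‖ite _ _ _‖ ≤ B
        split_ifs with h
        exacts [h, by simpa using hB0]

theorem norm_mk_le_of_tendsto {g : lp X ∞} {ℓ : ℝ} (hℓ : Tendsto (fun n => ‖g n‖) U (𝓝 ℓ)) :
    ‖(Submodule.Quotient.mk g : lp X ∞ ⧸ nullIdeal X U)‖ ≤ ℓ :=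
  le_of_forall_gt_imp_ge_of_dense fun _ hB =>
    norm_mk_le_of_eventually_norm_le <| (hℓ.eventually (gt_mem_nhds hB)).mono fun _ => le_of_lt

theorem norm_add_smul_mul_le_of_tendsto_nradius (T : ∀ n, X n →L[ℝ] X n) {M : ℝ}
    (hM : ∀ n, ‖T n‖ ≤ M) {Tq : (lp X ∞ ⧸ nullIdeal X U) →L[ℝ] (lp X ∞ ⧸ nullIdeal X U)}
    (hTq : ∀ g h : lp X ∞, (∀ n, h n = T n (g n)) →
      Tq (Submodule.Quotient.mk g) = Submodule.Quotient.mk h)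
    {L : ℝ} (hL : Tendsto (fun n => nradius (T n)) U (𝓝 L)) {s : ℝ} (hs : |s| * L < 1)
    (z : lp X ∞ ⧸ nullIdeal X U) :
    ‖z + s • Tq z‖ * (1 - |s| * L) ≤ (1 + s ^ 2 * M ^ 2) * ‖z‖ := by
  rw [← div_le_iff₀' (by positivity)]
  refine QuotientAddGroup.le_norm_iff.mpr fun g hg => ?_
  obtain rfl : Submodule.Quotient.mk g = z := hg
  have hTg : Memℓp (fun n => T n (g n)) ∞ := by
    refine memℓp_infty ⟨M * ‖g‖, ?_⟩
    rintro _ ⟨n, rfl⟩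
    calc ‖T n (g n)‖ ≤ ‖T n‖ * ‖g n‖ := (T n).le_opNorm _
      _ ≤ ‖T n‖ * ‖g‖ := by gcongr; exact lp.norm_apply_le_norm top_ne_zero g n
      _ ≤ M * ‖g‖ := by gcongr; exact hM n
  let h : lp X ∞ := g + s • ⟨_, hTg⟩
  have hmk : Submodule.Quotient.mk h =
      Submodule.Quotient.mk g + s • Tq (Submodule.Quotient.mk g) := by
    rw [hTq g ⟨_, hTg⟩ fun _ => rfl]
    rfl
  have hpoint (n : ℕ) : ‖h n‖ * (1 - |s| * nradius (T n)) ≤ (1 + s ^ 2 * M ^ 2) * ‖g‖ := by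
    refine (norm_add_smul_apply_mul_le (T n) s (g n)).trans ?_
    have := pow_le_pow_left₀ (norm_nonneg _) (hM n) 2
    gcongr
    exact lp.norm_apply_le_norm top_ne_zero g n
  obtain ⟨ℓ, hℓ⟩ := U.exists_tendsto_of_abs_le (u := fun n => ‖h n‖) fun n => by
    rw [abs_norm]; exact lp.norm_apply_le_norm top_ne_zero h n
  have hlim : ℓ * (1 - |s| * L) ≤ (1 + s ^ 2 * M ^ 2) * ‖g‖ :=
    le_of_tendsto' (hℓ.mul (tendsto_const_nhds.sub (hL.const_mul |s|))) hpoint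
  rw [← hmk, div_le_iff₀' (by positivity)]
  exact (mul_le_mul_of_nonneg_right (norm_mk_le_of_tendsto hℓ) (by linarith)).trans hlim

end Ultraproduct

theorem ultraproduct_nradius_le_general
    (X : ℕ → Type*) [∀ n, NormedAddCommGroup (X n)] [∀ n, NormedSpace ℝ (X n)]
    (U : Ultrafilter ℕ)
    (T : ∀ n, X n →L[ℝ] X n) (M : ℝ) (hM : ∀ n, ‖T n‖ ≤ M)
    (Tq : (lp X ∞ ⧸ nullIdeal X U) →L[ℝ] (lp X ∞ ⧸ nullIdeal X U))
    (hTq : ∀ g h : lp X ∞, (∀ n, h n = T n (g n)) →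
      Tq (Submodule.Quotient.mk g) = Submodule.Quotient.mk h)
    (L : ℝ) (hL : Tendsto (fun n => nradius (T n)) (U : Filter ℕ) (nhds L)) :
    nradius Tq ≤ L :=
  nradius_le_of_forall_norm_add_smul_mul_le Tq (ge_of_tendsto' hL fun n => nradius_nonneg_s9 (T n))
    fun _ hs => norm_add_smul_mul_le_of_tendsto_nradius T hM hTq hL hs

theorem ultraproduct_nradius_le
    (X : ℕ → Type*) [∀ n, NormedAddCommGroup (X n)] [∀ n, NormedSpace ℝ (X n)]
    [∀ n, CompleteSpace (X n)]
    (U : Ultrafilter ℕ) (hU : (U : Filter ℕ) ≤ Filter.cofinite)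
    (T : ∀ n, X n →L[ℝ] X n) (M : ℝ) (hM : ∀ n, ‖T n‖ ≤ M)
    (Tq : (lp X ∞ ⧸ nullIdeal X U) →L[ℝ] (lp X ∞ ⧸ nullIdeal X U))
    (hTq : ∀ g h : lp X ∞, (∀ n, h n = T n (g n)) →
      Tq (Submodule.Quotient.mk g) = Submodule.Quotient.mk h)
    (L : ℝ) (hL : Tendsto (fun n => nradius (T n)) (U : Filter ℕ) (nhds L)) :
    nradius Tq ≤ L :=
  ultraproduct_nradius_le_general X U T M hM Tq hTq L hL
end
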